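/- POD best-approximation property: let A ψ = Σ_{p=1}^P ⟨f_p, ψ⟩ f_p with orthonormal eigenvectors v¹, ..., v^K of A associated to eigenvalues λ₁ ≥ λ₂ ≥ ... ≥ λ_K ≥ 0, and let V_l = span(v¹,...,v^l). Then for any subspace W_l of H of dimension at most l, Σ_{p=1}^P dist(f_p, V_l)² ≤ Σ_{p=1}^P dist(f_p, W_l)². -/

import Mathlib

/-! Writing `P_U` for the orthogonal projection onto `U`, one has
`∑ p, dist (f p) U ^ 2 = ∑ p, ‖f p‖ ^ 2 - ∑ m, λ m * ⟪v m, P_U (v m)⟫`, because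
`∑ p, ⟪f p, T (f p)⟫ = tr (T ∘ A) = ∑ m, λ m * ⟪v m, T (v m)⟫` for every operator `T`.
The weights `⟪v m, P_U (v m)⟫` lie in `[0, 1]` and sum to `tr P_U = dim U ≤ l`, and for
`U = V_l` they are the indicator of `m < l`. Among all weights `d` with these properties the
indicator maximises `∑ m, λ m * d m` when `λ` is decreasing: compare every `λ m` with `λ l`. -/

open scoped RealInnerProductSpace

open Finset

theorem Fin.sum_mul_le_sum_lt_of_antitone {K l : ℕ} {lam d : Fin K → ℝ}
    (hlam₀ : ∀ m, 0 ≤ lam m) (hlam : Antitone lam)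
    (hd₀ : ∀ m, 0 ≤ d m) (hd₁ : ∀ m, d m ≤ 1) (hd : ∑ m, d m ≤ l) :
    ∑ m, lam m * d m ≤ ∑ m ∈ {m : Fin K | (m : ℕ) < l}, lam m := by
  set c : ℝ := if h : l < K then lam ⟨l, h⟩ else 0
  have hc₀ : 0 ≤ c := by unfold c; split_ifs <;> simp [hlam₀]
  have hpoint : ∀ m, lam m * d m ≤
      (if (m : ℕ) < l then lam m else 0) + c * (d m - if (m : ℕ) < l then 1 else 0) := by
    intro m
    split_ifs with hm
    · have hcm : c ≤ lam m := by
        unfold c; split_ifs with h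
        · exact hlam (Fin.mk_le_mk.2 hm.le)
        · exact hlam₀ m
      nlinarith [hd₁ m]
    · have hmc : lam m ≤ c := by
        have h : l < K := (not_lt.1 hm).trans_lt m.2
        simpa [c, h] using hlam (show (⟨l, h⟩ : Fin K) ≤ m from not_lt.1 hm)
      nlinarith [hd₀ m]
  have hexcess : c * (∑ m, d m - #{m : Fin K | (m : ℕ) < l}) ≤ 0 := by
    by_cases h : l < K
    · rw [Fin.card_filter_val_lt, min_eq_right h.le]
      exact mul_nonpos_of_nonneg_of_nonpos hc₀ (by linarith)
    · simp [c, h]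
  calc ∑ m, lam m * d m
      ≤ ∑ m : Fin K, ((if (m : ℕ) < l then lam m else 0) +
          c * (d m - if (m : ℕ) < l then 1 else 0)) :=
        sum_le_sum fun m _ => hpoint m
    _ = ∑ m ∈ {m : Fin K | (m : ℕ) < l}, lam m +
          c * (∑ m, d m - #{m : Fin K | (m : ℕ) < l}) := by
        rw [sum_add_distrib, ← mul_sum, sum_sub_distrib, sum_boole, ← sum_filter]
    _ ≤ ∑ m ∈ {m : Fin K | (m : ℕ) < l}, lam m := by linarith

namespace Submodule

variable {H : Type*} [NormedAddCommGroup H] [InnerProductSpace ℝ H]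

theorem infDist_eq_norm_sub_starProjection (U : Submodule ℝ H) [U.HasOrthogonalProjection]
    (x : H) : Metric.infDist x U = ‖x - U.starProjection x‖ := by
  rw [Metric.infDist_eq_iInf, starProjection_minimal]
  simp only [dist_eq_norm]
  rfl

theorem infDist_sq_eq_norm_sq_sub_inner_starProjection (U : Submodule ℝ H)
    [U.HasOrthogonalProjection] (x : H) :
    Metric.infDist x U ^ 2 = ‖x‖ ^ 2 - ⟪x, U.starProjection x⟫ := by
  have hperp : ⟪x - U.starProjection x, U.starProjection x⟫ = 0 :=
    U.starProjection_inner_eq_zero x _ (U.starProjection_apply_mem x)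
  rw [U.infDist_eq_norm_sub_starProjection, ← real_inner_self_eq_norm_sq,
    ← real_inner_self_eq_norm_sq, inner_sub_right, hperp, sub_zero, inner_sub_left,
    real_inner_comm x (U.starProjection x)]

theorem inner_starProjection_self_nonneg (U : Submodule ℝ H) [U.HasOrthogonalProjection]
    (x : H) : 0 ≤ ⟪x, U.starProjection x⟫ := by
  simpa [real_inner_comm] using U.re_inner_starProjection_nonneg x

theorem inner_starProjection_self_le_norm_sq (U : Submodule ℝ H) [U.HasOrthogonalProjection]
    (x : H) : ⟪x, U.starProjection x⟫ ≤ ‖x‖ ^ 2 := by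
  have := U.infDist_sq_eq_norm_sq_sub_inner_starProjection x
  nlinarith [sq_nonneg (Metric.infDist x U)]

theorem sum_inner_starProjection_self_eq_finrank [FiniteDimensional ℝ H]
    {ι : Type*} [Fintype ι] (b : OrthonormalBasis ι ℝ H) (U : Submodule ℝ H) :
    ∑ i, ⟪b i, U.starProjection (b i)⟫ = Module.finrank ℝ U :=
  (LinearMap.trace_eq_sum_inner _ b).symm.trans <| LinearMap.IsProj.trace
    ⟨U.starProjection_apply_mem, fun _ hx => U.starProjection_eq_self_iff.2 hx⟩

theorem inner_starProjection_span_image_self {ι : Type*} {v : ι → H} (hv : Orthonormal ℝ v)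
    (s : Set ι) [DecidablePred (· ∈ s)] [(span ℝ (v '' s)).HasOrthogonalProjection] (i : ι) :
    ⟪v i, (span ℝ (v '' s)).starProjection (v i)⟫ = if i ∈ s then 1 else 0 := by
  split_ifs with hi
  · rw [starProjection_eq_self_iff.2 (subset_span (Set.mem_image_of_mem v hi)),
      real_inner_self_eq_norm_sq, hv.1 i, one_pow]
  · have hperp : span ℝ {v i} ⟂ span ℝ (v '' s) := by
      rw [isOrtho_span]
      rintro _ rfl _ ⟨j, hj, rfl⟩
      exact hv.inner_eq_zero (ne_of_mem_of_not_mem hj hi).symm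
    rw [(starProjection_apply_eq_zero_iff _).2 (isOrtho_iff_le.1 hperp (mem_span_singleton_self _)),
      inner_zero_right]

end Submodule

namespace OrthonormalBasis

variable {H : Type*} [NormedAddCommGroup H] [InnerProductSpace ℝ H]
variable {ι κ : Type*} [Fintype ι] [Fintype κ] (b : OrthonormalBasis ι ℝ H) {f : κ → H}
  {lam : ι → ℝ}

theorem sum_inner_apply_eq_sum_mul_inner_apply
    (heig : ∀ i, ∑ p, ⟪f p, b i⟫ • f p = lam i • b i) (T : H →ₗ[ℝ] H) :
    ∑ p, ⟪f p, T (f p)⟫ = ∑ i, lam i * ⟪b i, T (b i)⟫ :=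
  calc ∑ p, ⟪f p, T (f p)⟫ = ∑ p, ∑ i, ⟪f p, b i⟫ * ⟪b i, T (f p)⟫ := by
        simp only [b.sum_inner_mul_inner]
    _ = ∑ i, ⟪b i, T (∑ p, ⟪f p, b i⟫ • f p)⟫ := by
        rw [sum_comm]
        simp only [map_sum, map_smul, inner_sum, real_inner_smul_right]
    _ = ∑ i, lam i * ⟪b i, T (b i)⟫ := by
        simp only [heig, map_smul, real_inner_smul_right]

theorem sum_infDist_sq_eq (heig : ∀ i, ∑ p, ⟪f p, b i⟫ • f p = lam i • b i)
    (U : Submodule ℝ H) [U.HasOrthogonalProjection] :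
    ∑ p, Metric.infDist (f p) U ^ 2 =
      ∑ p, ‖f p‖ ^ 2 - ∑ i, lam i * ⟪b i, U.starProjection (b i)⟫ := by
  simp only [U.infDist_sq_eq_norm_sq_sub_inner_starProjection, sum_sub_distrib]
  exact congrArg _ (b.sum_inner_apply_eq_sum_mul_inner_apply heig U.starProjection)

end OrthonormalBasis

/-- POD best-approximation property: the span V_l of the first l
eigenvectors of the POD operator (eigenvalues in decreasing order) minimizes the
mean-square distance of the snapshots among all subspaces of dimension ≤ l. -/
theorem pod_best_approximation
    (H : Type*) [NormedAddCommGroup H] [InnerProductSpace ℝ H]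
    [FiniteDimensional ℝ H] (K P l : ℕ) (hK : Module.finrank ℝ H = K)
    (f : Fin P → H) (v : Fin K → H) (lam : Fin K → ℝ)
    (hon : Orthonormal ℝ v)
    (heig : ∀ m, (∑ p, ⟪f p, v m⟫ • f p) = lam m • v m)
    (hnn : ∀ m, 0 ≤ lam m)
    (hdec : ∀ m n : Fin K, m ≤ n → lam n ≤ lam m)
    (W : Submodule ℝ H) (hW : Module.finrank ℝ W ≤ l) :
    ∑ p, (Metric.infDist (f p)
        ((Submodule.span ℝ (v '' {m | (m : ℕ) < l}) : Submodule ℝ H) : Set H)) ^ 2 ≤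
      ∑ p, (Metric.infDist (f p) (W : Set H)) ^ 2 := by
  have hspan : ⊤ ≤ Submodule.span ℝ (Set.range v) :=
    (hon.linearIndependent.span_eq_top_of_card_eq_finrank' (by simp [hK])).ge
  obtain ⟨b, rfl⟩ : ∃ b : OrthonormalBasis (Fin K) ℝ H, ⇑b = v :=
    ⟨.mk hon hspan, OrthonormalBasis.coe_mk hon hspan⟩
  rw [b.sum_infDist_sq_eq heig, b.sum_infDist_sq_eq heig]
  refine sub_le_sub_left ?_ _
  calc ∑ m, lam m * ⟪b m, W.starProjection (b m)⟫
      ≤ ∑ m ∈ {m : Fin K | (m : ℕ) < l}, lam m := by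
        refine Fin.sum_mul_le_sum_lt_of_antitone hnn (fun m n => hdec m n)
          (fun m => W.inner_starProjection_self_nonneg _) (fun m => ?_) ?_
        · simpa [hon.1 m] using W.inner_starProjection_self_le_norm_sq (b m)
        · rw [W.sum_inner_starProjection_self_eq_finrank b]
          exact_mod_cast hW
    _ = _ := by
        simp [Submodule.inner_starProjection_span_image_self hon, sum_filter]
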